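/- For all real numbers x and y with 0 < x < 1, 0 < y < 1 and y ≠ 1/2, the binary relative entropy satisfies x·log(x/y) + (1−x)·log((1−x)/(1−y)) ≥ (log((1−y)/y)/(1−2y)) · (x−y)². -/

import Mathlib

open Real Set

namespace BinaryRelEntAux

/-- The auxiliary derivative function. -/
noncomputable def hfun (c t : ℝ) : ℝ := Real.log t - Real.log (1 - t) - 2 * c * t + c

/-- The main auxiliary function (binary relative entropy minus quadratic). -/
noncomputable def Ffun (c y t : ℝ) : ℝ :=
  t * Real.log t - t * Real.log y + (1 - t) * Real.log (1 - t)
    - (1 - t) * Real.log (1 - y) - c * (t - y) ^ 2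

lemma div_add_div_eq_one {d : ℝ} (hd : d ≠ 0) {p q : ℝ} (h : p + q = d) :
    p / d + q / d = 1 := by
  rw [← add_div, h, div_self hd]

lemma div_comb {d : ℝ} (hd : d ≠ 0) {p q u v r : ℝ} (h : p * u + q * v = r * d) :
    p / d * u + q / d * v = r := by
  rw [div_mul_eq_mul_div, div_mul_eq_mul_div, ← add_div, h, mul_div_assoc,
    div_self hd, mul_one]

lemma hfun_half (c : ℝ) : hfun c (1 / 2) = 0 := by
  simp only [hfun]
  rw [show (1:ℝ) - 1 / 2 = 1 / 2 by norm_num]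
  ring

lemma hfun_hasDerivAt (c t : ℝ) (h0 : 0 < t) (h1 : t < 1) :
    HasDerivAt (hfun c) (t⁻¹ + (1 - t)⁻¹ - 2 * c) t := by
  have h1t : (0:ℝ) < 1 - t := by linarith
  have L : HasDerivAt (fun s : ℝ => 1 - s) (-1) t := by
    simpa using (hasDerivAt_id t).const_sub 1
  have B : HasDerivAt (fun s : ℝ => Real.log (1 - s)) (-1 / (1 - t)) t := L.log h1t.ne'
  have A : HasDerivAt Real.log t⁻¹ t := Real.hasDerivAt_log h0.ne'
  have C : HasDerivAt (fun s : ℝ => 2 * c * s) (2 * c) t := by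
    simpa using (hasDerivAt_id t).const_mul (2 * c)
  have := ((A.sub B).sub C).add_const c
  refine this.congr_deriv ?_
  field_simp
  ring

lemma hderiv_hasDerivAt (c t : ℝ) (h0 : 0 < t) (h1 : t < 1) :
    HasDerivAt (fun s : ℝ => s⁻¹ + (1 - s)⁻¹ - 2 * c)
      (-(t ^ 2)⁻¹ + ((1 - t) ^ 2)⁻¹) t := by
  have h1t : (0:ℝ) < 1 - t := by linarith
  have A : HasDerivAt (fun s : ℝ => s⁻¹) (-(t ^ 2)⁻¹) t := hasDerivAt_inv h0.ne'
  have L : HasDerivAt (fun s : ℝ => 1 - s) (-1) t := by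
    simpa using (hasDerivAt_id t).const_sub 1
  have B : HasDerivAt (fun s : ℝ => (1 - s)⁻¹) (-(((1 - t) ^ 2)⁻¹) * -1) t :=
    (hasDerivAt_inv h1t.ne').comp t L
  have := (A.add B).sub_const (2 * c)
  refine this.congr_deriv ?_
  ring

lemma hfun_concave (c : ℝ) : ConcaveOn ℝ (Ioc (0:ℝ) (1 / 2)) (hfun c) := by
  have hint : interior (Ioc (0:ℝ) (1 / 2)) = Ioo 0 (1 / 2) := interior_Ioc
  refine concaveOn_of_hasDerivWithinAt2_nonpos (convex_Ioc _ _)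
    (f' := fun t => t⁻¹ + (1 - t)⁻¹ - 2 * c)
    (f'' := fun t => -(t ^ 2)⁻¹ + ((1 - t) ^ 2)⁻¹) ?_ ?_ ?_ ?_
  · intro t ht
    have ht' : 0 < t ∧ t ≤ 1 / 2 := ht
    exact (hfun_hasDerivAt c t ht'.1 (by linarith [ht'.2])).continuousAt.continuousWithinAt
  · intro t ht
    rw [hint] at ht
    exact (hfun_hasDerivAt c t ht.1 (by linarith [ht.2])).hasDerivWithinAt
  · intro t ht
    rw [hint] at ht
    exact (hderiv_hasDerivAt c t ht.1 (by linarith [ht.2])).hasDerivWithinAt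
  · intro t ht
    rw [hint] at ht
    obtain ⟨ht0, ht2⟩ := ht
    have h1t : (0:ℝ) < 1 - t := by linarith
    have hsq : t ^ 2 ≤ (1 - t) ^ 2 := by nlinarith
    have hpos : (0:ℝ) < t ^ 2 := by positivity
    have := one_div_le_one_div_of_le hpos hsq
    simp only [one_div] at this
    linarith

lemma hfun_convex (c : ℝ) : ConvexOn ℝ (Ico (1 / 2 : ℝ) 1) (hfun c) := by
  have hint : interior (Ico (1 / 2 : ℝ) 1) = Ioo (1 / 2) 1 := interior_Ico
  refine convexOn_of_hasDerivWithinAt2_nonneg (convex_Ico _ _)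
    (f' := fun t => t⁻¹ + (1 - t)⁻¹ - 2 * c)
    (f'' := fun t => -(t ^ 2)⁻¹ + ((1 - t) ^ 2)⁻¹) ?_ ?_ ?_ ?_
  · intro t ht
    have ht' : 1 / 2 ≤ t ∧ t < 1 := ht
    exact (hfun_hasDerivAt c t (by linarith [ht'.1]) ht'.2).continuousAt.continuousWithinAt
  · intro t ht
    rw [hint] at ht
    exact (hfun_hasDerivAt c t (by linarith [ht.1]) ht.2).hasDerivWithinAt
  · intro t ht
    rw [hint] at ht
    exact (hderiv_hasDerivAt c t (by linarith [ht.1]) ht.2).hasDerivWithinAt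
  · intro t ht
    rw [hint] at ht
    obtain ⟨ht2, ht1⟩ := ht
    have h1t : (0:ℝ) < 1 - t := by linarith
    have ht0 : (0:ℝ) < t := by linarith
    have hsq : (1 - t) ^ 2 ≤ t ^ 2 := by nlinarith
    have hpos : (0:ℝ) < (1 - t) ^ 2 := by positivity
    have := one_div_le_one_div_of_le hpos hsq
    simp only [one_div] at this
    linarith

/-- Sign of `hfun` on `(0, y]`. -/
lemma hfun_nonpos_left {c y x : ℝ} (hx0 : 0 < x) (hxy : x ≤ y) (hy2 : y < 1 / 2)
    (hzero : hfun c y = 0) : hfun c x ≤ 0 := by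
  rcases eq_or_lt_of_le hxy with rfl | hlt
  · exact le_of_eq hzero
  · have hd : (0:ℝ) < 1 / 2 - x := by linarith
    set a : ℝ := (1 / 2 - y) / (1 / 2 - x) with ha_def
    set b : ℝ := (y - x) / (1 / 2 - x) with hb_def
    have ha : 0 < a := div_pos (by linarith) hd
    have hb : 0 ≤ b := div_nonneg (by linarith) hd.le
    have hab : a + b = 1 := by
      rw [ha_def, hb_def]; exact div_add_div_eq_one hd.ne' (by ring)
    have hcomb : a • x + b • (1 / 2 : ℝ) = y := by
      rw [smul_eq_mul, smul_eq_mul, ha_def, hb_def]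
      exact div_comb hd.ne' (by ring)
    have m1 : x ∈ Ioc (0:ℝ) (1/2) := mem_Ioc.mpr ⟨hx0, by linarith⟩
    have m2 : (1/2 : ℝ) ∈ Ioc (0:ℝ) (1/2) := mem_Ioc.mpr ⟨by norm_num, le_refl _⟩
    have H := (hfun_concave c).2 m1 m2 ha.le hb hab
    rw [hcomb, hzero, hfun_half, smul_eq_mul, smul_eq_mul] at H
    nlinarith [H, ha]

/-- Sign of `hfun` on `[y, 1/2]`. -/
lemma hfun_nonneg_midleft {c y x : ℝ} (hy0 : 0 < y) (hyx : y ≤ x) (hx2 : x ≤ 1 / 2)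
    (hy2 : y < 1 / 2) (hzero : hfun c y = 0) : 0 ≤ hfun c x := by
  have hd : (0:ℝ) < 1 / 2 - y := by linarith
  set a : ℝ := (1 / 2 - x) / (1 / 2 - y) with ha_def
  set b : ℝ := (x - y) / (1 / 2 - y) with hb_def
  have ha : 0 ≤ a := div_nonneg (by linarith) hd.le
  have hb : 0 ≤ b := div_nonneg (by linarith) hd.le
  have hab : a + b = 1 := by
    rw [ha_def, hb_def]; exact div_add_div_eq_one hd.ne' (by ring)
  have hcomb : a • y + b • (1 / 2 : ℝ) = x := by
    rw [smul_eq_mul, smul_eq_mul, ha_def, hb_def]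
    exact div_comb hd.ne' (by ring)
  have m1 : y ∈ Ioc (0:ℝ) (1/2) := mem_Ioc.mpr ⟨hy0, hy2.le⟩
  have m2 : (1/2 : ℝ) ∈ Ioc (0:ℝ) (1/2) := mem_Ioc.mpr ⟨by norm_num, le_refl _⟩
  have H := (hfun_concave c).2 m1 m2 ha hb hab
  rw [hcomb, hzero, hfun_half, smul_eq_mul, smul_eq_mul] at H
  linarith

/-- Sign of `hfun` on `[1/2, 1-y]`. -/
lemma hfun_nonpos_midright {c y x : ℝ} (hy0 : 0 < y) (h2x : 1 / 2 ≤ x) (hx : x ≤ 1 - y)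
    (hy2 : y < 1 / 2) (hzero : hfun c (1 - y) = 0) : hfun c x ≤ 0 := by
  have hd : (0:ℝ) < 1 / 2 - y := by linarith
  set a : ℝ := (1 - y - x) / (1 / 2 - y) with ha_def
  set b : ℝ := (x - 1 / 2) / (1 / 2 - y) with hb_def
  have ha : 0 ≤ a := div_nonneg (by linarith) hd.le
  have hb : 0 ≤ b := div_nonneg (by linarith) hd.le
  have hab : a + b = 1 := by
    rw [ha_def, hb_def]; exact div_add_div_eq_one hd.ne' (by ring)
  have hcomb : a • (1 / 2 : ℝ) + b • (1 - y) = x := by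
    rw [smul_eq_mul, smul_eq_mul, ha_def, hb_def]
    exact div_comb hd.ne' (by ring)
  have m1 : (1/2 : ℝ) ∈ Ico (1/2 : ℝ) 1 := mem_Ico.mpr ⟨le_refl _, by norm_num⟩
  have m2 : (1 - y) ∈ Ico (1/2 : ℝ) 1 := mem_Ico.mpr ⟨by linarith, by linarith⟩
  have H := (hfun_convex c).2 m1 m2 ha hb hab
  rw [hcomb, hzero, hfun_half, smul_eq_mul, smul_eq_mul] at H
  linarith

/-- Sign of `hfun` on `[1-y, 1)`. -/
lemma hfun_nonneg_right {c y x : ℝ} (hy0 : 0 < y) (h1yx : 1 - y ≤ x) (hx1 : x < 1)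
    (hy2 : y < 1 / 2) (hzero : hfun c (1 - y) = 0) : 0 ≤ hfun c x := by
  rcases eq_or_lt_of_le h1yx with h | hlt
  · rw [← h]; exact le_of_eq hzero.symm
  · have hd : (0:ℝ) < x - 1 / 2 := by linarith
    set a : ℝ := (x - (1 - y)) / (x - 1 / 2) with ha_def
    set b : ℝ := (1 / 2 - y) / (x - 1 / 2) with hb_def
    have ha : 0 ≤ a := div_nonneg (by linarith) hd.le
    have hb : 0 < b := div_pos (by linarith) hd
    have hab : a + b = 1 := by
      rw [ha_def, hb_def]; exact div_add_div_eq_one hd.ne' (by ring)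
    have hcomb : a • (1 / 2 : ℝ) + b • x = 1 - y := by
      rw [smul_eq_mul, smul_eq_mul, ha_def, hb_def]
      exact div_comb hd.ne' (by ring)
    have m1 : (1/2 : ℝ) ∈ Ico (1/2 : ℝ) 1 := mem_Ico.mpr ⟨le_refl _, by norm_num⟩
    have m2 : x ∈ Ico (1/2 : ℝ) 1 := mem_Ico.mpr ⟨by linarith, hx1⟩
    have H := (hfun_convex c).2 m1 m2 ha hb.le hab
    rw [hcomb, hzero, hfun_half, smul_eq_mul, smul_eq_mul] at H
    nlinarith [H, hb]

lemma Ffun_hasDerivAt {c y : ℝ} (hc : Real.log (1 - y) - Real.log y = c * (1 - 2 * y))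
    {t : ℝ} (h0 : 0 < t) (h1 : t < 1) :
    HasDerivAt (Ffun c y) (hfun c t) t := by
  have h1t : (0:ℝ) < 1 - t := by linarith
  have L : HasDerivAt (fun s : ℝ => 1 - s) (-1) t := by
    simpa using (hasDerivAt_id t).const_sub 1
  have A : HasDerivAt (fun s : ℝ => s * Real.log s) (Real.log t + 1) t :=
    Real.hasDerivAt_mul_log h0.ne'
  have A2 : HasDerivAt (fun s : ℝ => s * Real.log y) (Real.log y) t := by
    simpa using (hasDerivAt_id t).mul_const (Real.log y)
  have B : HasDerivAt (fun s : ℝ => (1 - s) * Real.log (1 - s))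
      ((Real.log (1 - t) + 1) * -1) t :=
    (Real.hasDerivAt_mul_log h1t.ne').comp t L
  have B2 : HasDerivAt (fun s : ℝ => (1 - s) * Real.log (1 - y))
      (-1 * Real.log (1 - y)) t := L.mul_const (Real.log (1 - y))
  have Q : HasDerivAt (fun s : ℝ => c * (s - y) ^ 2) (c * (2 * (t - y))) t := by
    have := (((hasDerivAt_id t).sub_const y).pow 2).const_mul c
    refine this.congr_deriv ?_
    simp only [id_eq]
    push_cast
    ring
  have := (((A.sub A2).add B).sub B2).sub Q
  refine this.congr_deriv ?_
  simp only [hfun]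
  linear_combination hc

lemma Ffun_self (c y : ℝ) : Ffun c y y = 0 := by simp only [Ffun]; ring

lemma Ffun_one_sub {c y : ℝ} (hc : Real.log (1 - y) - Real.log y = c * (1 - 2 * y)) :
    Ffun c y (1 - y) = 0 := by
  simp only [Ffun]
  have h : (1 : ℝ) - (1 - y) = y := by ring
  rw [h]
  linear_combination (1 - 2 * y) * hc

lemma hfun_zero_y {c y : ℝ} (hc : Real.log (1 - y) - Real.log y = c * (1 - 2 * y)) :
    hfun c y = 0 := by
  simp only [hfun]; linear_combination -hc

lemma hfun_zero_one_sub {c y : ℝ} (hc : Real.log (1 - y) - Real.log y = c * (1 - 2 * y)) :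
    hfun c (1 - y) = 0 := by
  simp only [hfun]
  have h : (1 : ℝ) - (1 - y) = y := by ring
  rw [h]
  linear_combination hc

/-- Core lemma: for `0 < y < 1/2` and `x ∈ (0,1)`, `Ffun c y x ≥ 0`. -/
lemma Ffun_nonneg {c y x : ℝ} (hy0 : 0 < y) (hy2 : y < 1 / 2) (hx0 : 0 < x) (hx1 : x < 1)
    (hc : Real.log (1 - y) - Real.log y = c * (1 - 2 * y)) :
    0 ≤ Ffun c y x := by
  have hy1 : y < 1 := by linarith
  have hzy := hfun_zero_y hc
  have hz1y := hfun_zero_one_sub hc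
  have cont : ∀ s : Set ℝ, s ⊆ Ioo (0:ℝ) 1 → ContinuousOn (Ffun c y) s := by
    intro s hs
    intro t ht
    obtain ⟨ht0, ht1⟩ := hs ht
    exact (Ffun_hasDerivAt hc ht0 ht1).continuousAt.continuousWithinAt
  rcases le_or_gt x y with hxy | hyx
  · -- F antitone on [x, y]
    have hanti : AntitoneOn (Ffun c y) (Icc x y) := by
      refine antitoneOn_of_hasDerivWithinAt_nonpos (convex_Icc _ _)
        (cont _ ?_) (f' := hfun c) ?_ ?_
      · intro t ht; exact ⟨lt_of_lt_of_le hx0 ht.1, lt_of_le_of_lt ht.2 hy1⟩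
      · intro t ht
        rw [interior_Icc] at ht
        exact (Ffun_hasDerivAt hc (hx0.trans ht.1) (by linarith [ht.2])).hasDerivWithinAt
      · intro t ht
        rw [interior_Icc] at ht
        exact hfun_nonpos_left (hx0.trans ht.1) ht.2.le hy2 hzy
    have := hanti (left_mem_Icc.mpr hxy) (right_mem_Icc.mpr hxy) hxy
    rw [Ffun_self] at this
    linarith
  · rcases le_or_gt x (1 / 2) with hx2 | h2x
    · -- F monotone on [y, x]
      have hmono : MonotoneOn (Ffun c y) (Icc y x) := by
        refine monotoneOn_of_hasDerivWithinAt_nonneg (convex_Icc _ _)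
          (cont _ ?_) (f' := hfun c) ?_ ?_
        · intro t ht; exact ⟨lt_of_lt_of_le hy0 ht.1, lt_of_le_of_lt ht.2 hx1⟩
        · intro t ht
          rw [interior_Icc] at ht
          exact (Ffun_hasDerivAt hc (hy0.trans ht.1) (by linarith [ht.2])).hasDerivWithinAt
        · intro t ht
          rw [interior_Icc] at ht
          exact hfun_nonneg_midleft hy0 ht.1.le (by linarith [ht.2]) hy2 hzy
      have := hmono (left_mem_Icc.mpr hyx.le) (right_mem_Icc.mpr hyx.le) hyx.le
      rw [Ffun_self] at this
      linarith
    · rcases le_or_gt x (1 - y) with hx1y | h1yx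
      · -- F antitone on [x, 1-y]
        have hanti : AntitoneOn (Ffun c y) (Icc x (1 - y)) := by
          refine antitoneOn_of_hasDerivWithinAt_nonpos (convex_Icc _ _)
            (cont _ ?_) (f' := hfun c) ?_ ?_
          · intro t ht; exact ⟨lt_of_lt_of_le hx0 ht.1, lt_of_le_of_lt ht.2 (by linarith)⟩
          · intro t ht
            rw [interior_Icc] at ht
            exact (Ffun_hasDerivAt hc (hx0.trans ht.1) (by linarith [ht.2])).hasDerivWithinAt
          · intro t ht
            rw [interior_Icc] at ht
            exact hfun_nonpos_midright hy0 (by linarith [ht.1]) ht.2.le hy2 hz1y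
        have := hanti (left_mem_Icc.mpr hx1y) (right_mem_Icc.mpr hx1y) hx1y
        rw [Ffun_one_sub hc] at this
        linarith
      · -- F monotone on [1-y, x]
        have hmono : MonotoneOn (Ffun c y) (Icc (1 - y) x) := by
          refine monotoneOn_of_hasDerivWithinAt_nonneg (convex_Icc _ _)
            (cont _ ?_) (f' := hfun c) ?_ ?_
          · intro t ht; exact ⟨lt_of_lt_of_le (by linarith) ht.1, lt_of_le_of_lt ht.2 hx1⟩
          · intro t ht
            rw [interior_Icc] at ht
            exact (Ffun_hasDerivAt hc (by linarith [ht.1]) (by linarith [ht.2])).hasDerivWithinAt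
          · intro t ht
            rw [interior_Icc] at ht
            exact hfun_nonneg_right hy0 ht.1.le (by linarith [ht.2]) hy2 hz1y
        have := hmono (left_mem_Icc.mpr h1yx.le) (right_mem_Icc.mpr h1yx.le) h1yx.le
        rw [Ffun_one_sub hc] at this
        linarith

end BinaryRelEntAux

open BinaryRelEntAux in
/-- For all `x, y ∈ (0,1)` with `y ≠ 1/2`, the binary relative entropy
`x·log(x/y) + (1−x)·log((1−x)/(1−y))` is bounded below by
`(log((1−y)/y)/(1−2y)) · (x−y)²`. -/
theorem binary_relative_entropy_ge_coeff_mul_sq (x y : ℝ)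
    (hx0 : 0 < x) (hx1 : x < 1) (hy0 : 0 < y) (hy1 : y < 1) (hy : y ≠ 1 / 2) :
    x * Real.log (x / y) + (1 - x) * Real.log ((1 - x) / (1 - y)) ≥
      (Real.log ((1 - y) / y) / (1 - 2 * y)) * (x - y) ^ 2 := by
  have h1y : (0:ℝ) < 1 - y := by linarith
  have h1x : (0:ℝ) < 1 - x := by linarith
  rw [Real.log_div hx0.ne' hy0.ne', Real.log_div h1x.ne' h1y.ne',
    Real.log_div h1y.ne' hy0.ne', ge_iff_le]
  rcases lt_or_gt_of_ne hy with hy2 | hy2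
  · -- y < 1/2
    set c : ℝ := (Real.log (1 - y) - Real.log y) / (1 - 2 * y) with hc_def
    have h2y : (0:ℝ) < 1 - 2 * y := by linarith
    have hc : Real.log (1 - y) - Real.log y = c * (1 - 2 * y) := by
      rw [hc_def, div_mul_cancel₀ _ h2y.ne']
    have key := Ffun_nonneg hy0 hy2 hx0 hx1 hc
    simp only [Ffun] at key
    have e : (Real.log (1 - y) - Real.log y) / (1 - 2 * y) * (x - y) ^ 2
        = c * (x - y) ^ 2 := by rw [hc_def]
    rw [e]
    nlinarith [key]
  · -- y > 1/2 : apply core lemma to (1-x, 1-y)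
    set c : ℝ := (Real.log y - Real.log (1 - y)) / (2 * y - 1) with hc_def
    have h2y : (0:ℝ) < 2 * y - 1 := by linarith
    have hc : Real.log (1 - (1 - y)) - Real.log (1 - y) = c * (1 - 2 * (1 - y)) := by
      rw [hc_def, show (1:ℝ) - (1 - y) = y by ring,
        show (1:ℝ) - 2 * (1 - y) = 2 * y - 1 by ring, div_mul_cancel₀ _ h2y.ne']
    have key := Ffun_nonneg (y := 1 - y) (x := 1 - x) (by linarith) (by linarith)
      h1x (by linarith) hc
    simp only [Ffun] at key
    rw [show (1:ℝ) - (1 - x) = x by ring, show (1:ℝ) - (1 - y) = y by ring] at key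
    have e : (Real.log (1 - y) - Real.log y) / (1 - 2 * y) * (x - y) ^ 2
        = c * (1 - x - (1 - y)) ^ 2 := by
      rw [hc_def, show (2 * y - 1 : ℝ) = -(1 - 2 * y) by ring,
        show Real.log y - Real.log (1 - y) = -(Real.log (1 - y) - Real.log y) by ring,
        neg_div_neg_eq]
      ring
    rw [e]
    nlinarith [key]
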